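/- arXiv:2403.16773 — 2 statements merged into one kernel-verified Lean document; each statement's English description precedes it below -/
import Mathlib

section
/- With the true covariate matrix X, the score of the negative log-likelihood has mean zero at the true parameter: the gradient ∇_θ L(θ) exists at θ0 = (ρ0, β0ᵀ, σ0²)ᵀ and E[∇_θ L(θ0)] = 0 ∈ ℝ^{p+2}. -/
/-!
At `θ₀` the residual `r = S₀Y* − Xβ₀ = E + S₀ε` is the image `Uξ` of the noise vector
`ξ = (E, ε)` under `U = [I | S₀]`, and `U diag(σ₀², λ²) Uᵀ = σ₀² I + λ² S₀S₀ᵀ = Ω₀`: the model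
covariance is the true covariance of `r`. By Jacobi's formula and `(Ω⁻¹)˙ = −Ω⁻¹ Ω̇ Ω⁻¹`, the
derivative of `L` at `θ₀` in a direction `(a, b, c)` is
`a tr(S₀⁻¹W) + ½ tr(Ω₀⁻¹Ω̇) + ṙᵀΩ₀⁻¹r − ½ rᵀΩ₀⁻¹Ω̇Ω₀⁻¹r`, with `ṙ = −aWY* − Xb`.
Since `WY* = WS₀⁻¹(Xβ₀ + r)`, this is a quadratic polynomial in the centred, uncorrelated `ξ`,
and `E[(m + Aξ)ᵀ(Bξ)] = tr(A Cov(ξ) Bᵀ)` gives `E[ṙᵀΩ₀⁻¹r] = −a tr(WS₀⁻¹)` and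
`E[rᵀΩ₀⁻¹Ω̇Ω₀⁻¹r] = tr(Ω₀⁻¹Ω̇)`: the four terms cancel in pairs.
-/

open MeasureTheory ProbabilityTheory Matrix
open scoped Matrix

namespace PSAR

/-- `S(ρ) = I_N − ρ W`. -/
noncomputable def Smat {N : ℕ} (W : Matrix (Fin N) (Fin N) ℝ) (ρ : ℝ) :
    Matrix (Fin N) (Fin N) ℝ :=
  1 - ρ • W

/-- `Ω(ρ, σ²) = σ² I_N + λ² S(ρ) S(ρ)ᵀ`. -/
noncomputable def Omat {N : ℕ} (W : Matrix (Fin N) (Fin N) ℝ) (lam2 ρ σ2 : ℝ) :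
    Matrix (Fin N) (Fin N) ℝ :=
  σ2 • (1 : Matrix (Fin N) (Fin N) ℝ) + lam2 • (Smat W ρ * (Smat W ρ)ᵀ)

/-- `𝕎S(ρ) = W S(ρ)ᵀ + S(ρ) Wᵀ`. -/
noncomputable def WSmat {N : ℕ} (W : Matrix (Fin N) (Fin N) ℝ) (ρ : ℝ) :
    Matrix (Fin N) (Fin N) ℝ :=
  W * (Smat W ρ)ᵀ + Smat W ρ * Wᵀ

/-- `𝕎(ρ) = Wᵀ S(ρ) + S(ρ)ᵀ W` (least squares version). -/
noncomputable def WLSmat {N : ℕ} (W : Matrix (Fin N) (Fin N) ℝ) (ρ : ℝ) :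
    Matrix (Fin N) (Fin N) ℝ :=
  Wᵀ * Smat W ρ + (Smat W ρ)ᵀ * W

/-- The negative log-likelihood
`L(θ) = −log det S(ρ) + (1/2) log det Ω(ρ,σ²) + (1/2)(S(ρ)Ys − Xβ)ᵀ Ω(ρ,σ²)⁻¹ (S(ρ)Ys − Xβ)`. -/
noncomputable def nll {N p1 p2 : ℕ} (W : Matrix (Fin N) (Fin N) ℝ) (lam2 : ℝ)
    (X : Matrix (Fin N) (Fin p1 ⊕ Fin p2) ℝ) (Ys : Fin N → ℝ)
    (ρ : ℝ) (β : Fin p1 ⊕ Fin p2 → ℝ) (σ2 : ℝ) : ℝ :=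
  - Real.log (Smat W ρ).det + (1 / 2) * Real.log (Omat W lam2 ρ σ2).det
    + (1 / 2) * ((Smat W ρ *ᵥ Ys - X *ᵥ β) ⬝ᵥ
        ((Omat W lam2 ρ σ2)⁻¹ *ᵥ (Smat W ρ *ᵥ Ys - X *ᵥ β)))

/-- Diagonal matrix `d(ρ)` with `d(ρ)_{ii} = 1/(S(ρ)ᵀ S(ρ))_{ii}`. -/
noncomputable def dmat {N : ℕ} (W : Matrix (Fin N) (Fin N) ℝ) (ρ : ℝ) :
    Matrix (Fin N) (Fin N) ℝ :=
  Matrix.diagonal fun i => ((((Smat W ρ)ᵀ * Smat W ρ) i i)⁻¹)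

/-- Entrywise first derivative `ḋ(ρ)` of `d(ρ)` in `ρ`. -/
noncomputable def dmatDot {N : ℕ} (W : Matrix (Fin N) (Fin N) ℝ) (ρ : ℝ) :
    Matrix (Fin N) (Fin N) ℝ :=
  Matrix.diagonal fun i => deriv (fun r => ((((Smat W r)ᵀ * Smat W r) i i)⁻¹)) ρ

/-- Entrywise second derivative `d̈(ρ)` of `d(ρ)` in `ρ`. -/
noncomputable def dmatDDot {N : ℕ} (W : Matrix (Fin N) (Fin N) ℝ) (ρ : ℝ) :
    Matrix (Fin N) (Fin N) ℝ :=
  Matrix.diagonal fun i => deriv (deriv (fun r => ((((Smat W r)ᵀ * Smat W r) i i)⁻¹))) ρ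

/-- Least squares objective `L_LS(γ) = ‖d(ρ) S(ρ)ᵀ (S(ρ)Y − Xβ)‖²`. -/
noncomputable def lsObj {N p1 p2 : ℕ} (W : Matrix (Fin N) (Fin N) ℝ)
    (X : Matrix (Fin N) (Fin p1 ⊕ Fin p2) ℝ) (Y : Fin N → ℝ)
    (ρ : ℝ) (β : Fin p1 ⊕ Fin p2 → ℝ) : ℝ :=
  ((dmat W ρ * (Smat W ρ)ᵀ) *ᵥ (Smat W ρ *ᵥ Y - X *ᵥ β)) ⬝ᵥ
    ((dmat W ρ * (Smat W ρ)ᵀ) *ᵥ (Smat W ρ *ᵥ Y - X *ᵥ β))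

/-- Observed response `Y* = S0⁻¹(Xβ0 + E) + ε`. -/
noncomputable def Yobs {N p1 p2 : ℕ} (W : Matrix (Fin N) (Fin N) ℝ) (ρ0 : ℝ)
    (X : Matrix (Fin N) (Fin p1 ⊕ Fin p2) ℝ) (β0 : Fin p1 ⊕ Fin p2 → ℝ)
    (E ε : Fin N → ℝ) : Fin N → ℝ :=
  (Smat W ρ0)⁻¹ *ᵥ (X *ᵥ β0 + E) + ε

/-- True response `Y = S0⁻¹(Xβ0 + E)`. -/
noncomputable def Ytrue {N p1 p2 : ℕ} (W : Matrix (Fin N) (Fin N) ℝ) (ρ0 : ℝ)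
    (X : Matrix (Fin N) (Fin p1 ⊕ Fin p2) ℝ) (β0 : Fin p1 ⊕ Fin p2 → ℝ)
    (E : Fin N → ℝ) : Fin N → ℝ :=
  (Smat W ρ0)⁻¹ *ᵥ (X *ᵥ β0 + E)

/-- Observed covariates `X* = (X1, X2 + Ex)`. -/
noncomputable def Xobs {N p1 p2 : ℕ} (X : Matrix (Fin N) (Fin p1 ⊕ Fin p2) ℝ)
    (Ex : Fin N → Fin p2 → ℝ) : Matrix (Fin N) (Fin p1 ⊕ Fin p2) ℝ :=
  X + Matrix.of fun i j => Sum.elim (fun _ => (0 : ℝ)) (fun k => Ex i k) j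

/-- All the noise entries of `E`, `ε`, `Ex` gathered as a single family. -/
def noiseFam {Ωs : Type*} {N p2 : ℕ} (E ε : Ωs → Fin N → ℝ)
    (Ex : Ωs → Fin N → Fin p2 → ℝ) :
    (Fin N ⊕ Fin N ⊕ Fin N × Fin p2) → Ωs → ℝ :=
  fun z ω => Sum.elim (fun i => E ω i) (Sum.elim (fun i => ε ω i) (fun q => Ex ω q.1 q.2)) z

end PSAR

namespace Matrix

variable {n : Type*} [Fintype n]

theorem IsSymm.dotProduct_mulVec_comm {R : Type*} [CommSemiring R] {M : Matrix n n R}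
    (hM : M.IsSymm) (x y : n → R) : x ⬝ᵥ (M *ᵥ y) = y ⬝ᵥ (M *ᵥ x) := by
  rw [dotProduct_mulVec, ← mulVec_transpose, hM.eq, dotProduct_comm]

theorem hasDerivAt_mul_apply {l m p : Type*} [Fintype m] {A : ℝ → Matrix l m ℝ}
    {B : ℝ → Matrix m p ℝ} {A' : Matrix l m ℝ} {B' : Matrix m p ℝ} {t₀ : ℝ}
    (hA : ∀ i j, HasDerivAt (fun t => A t i j) (A' i j) t₀)
    (hB : ∀ i j, HasDerivAt (fun t => B t i j) (B' i j) t₀) (i : l) (j : p) :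
    HasDerivAt (fun t => (A t * B t) i j) ((A' * B t₀ + A t₀ * B') i j) t₀ := by
  simp only [mul_apply, add_apply, ← Finset.sum_add_distrib]
  exact HasDerivAt.fun_sum fun k _ => (hA i k).mul (hB k j)

theorem hasDerivAt_dotProduct_mulVec {M : ℝ → Matrix n n ℝ} {M' : Matrix n n ℝ}
    {r : ℝ → n → ℝ} {r' : n → ℝ} {t₀ : ℝ}
    (hM : ∀ i j, HasDerivAt (fun t => M t i j) (M' i j) t₀) (hr : HasDerivAt r r' t₀) :
    HasDerivAt (fun t => r t ⬝ᵥ (M t *ᵥ r t))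
      (r' ⬝ᵥ (M t₀ *ᵥ r t₀) + r t₀ ⬝ᵥ (M' *ᵥ r t₀) + r t₀ ⬝ᵥ (M t₀ *ᵥ r')) t₀ := by
  have hr' := hasDerivAt_pi.mp hr
  refine (HasDerivAt.fun_sum fun i _ => (hr' i).mul (HasDerivAt.fun_sum fun j _ =>
    (hM i j).mul (hr' j))).congr_deriv ?_
  simp only [dotProduct, mulVec, Finset.mul_sum, ← Finset.sum_add_distrib, Pi.mul_apply]
  refine Finset.sum_congr rfl fun i _ => Finset.sum_congr rfl fun j _ => ?_
  ring

theorem dotProduct_mulVec_add_mulVec {ι : Type*} [Fintype ι] (m : n → ℝ) (A B : Matrix n ι ℝ)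
    (x : ι → ℝ) :
    (m + A *ᵥ x) ⬝ᵥ (B *ᵥ x) = (m ᵥ* B) ⬝ᵥ x + ∑ k, ∑ l, (Aᵀ * B) k l * (x k * x l) := by
  rw [add_dotProduct, dotProduct_mulVec]
  congr 1
  rw [← vecMul_transpose, dotProduct_mulVec, vecMul_vecMul]
  simp only [dotProduct, vecMul, Finset.sum_mul]
  rw [Finset.sum_comm]
  exact Finset.sum_congr rfl fun k _ => Finset.sum_congr rfl fun l _ => by ring

theorem differentiableAt_dotProduct_mulVec {α : Type*} [NormedAddCommGroup α] [NormedSpace ℝ α]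
    {M : α → Matrix n n ℝ} {r : α → n → ℝ} {x : α}
    (hM : ∀ i j, DifferentiableAt ℝ (fun a => M a i j) x)
    (hr : ∀ i, DifferentiableAt ℝ (fun a => r a i) x) :
    DifferentiableAt ℝ (fun a => r a ⬝ᵥ (M a *ᵥ r a)) x := by
  simp only [dotProduct, mulVec]
  fun_prop

variable [DecidableEq n]

theorem trace_adjugate_mul {R : Type*} [CommRing R] (A B : Matrix n n R) :
    (A.adjugate * B).trace = ∑ i, (A.updateCol i fun k => B k i).det := by
  refine Finset.sum_congr rfl fun i _ => ?_
  rw [← cramer_apply, cramer_eq_adjugate_mulVec]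
  simp [mul_apply, mulVec, dotProduct]

theorem hasDerivAt_det {M : ℝ → Matrix n n ℝ} {M' : Matrix n n ℝ} {t₀ : ℝ}
    (hM : ∀ i j, HasDerivAt (fun t => M t i j) (M' i j) t₀) :
    HasDerivAt (fun t => (M t).det) ((M t₀).adjugate * M').trace t₀ := by
  simp only [det_apply']
  refine (HasDerivAt.fun_sum fun σ _ =>
    (HasDerivAt.fun_finsetProd fun i _ => hM (σ i) i).const_mul _).congr_deriv ?_
  simp only [trace_adjugate_mul, det_apply', Finset.mul_sum]
  rw [Finset.sum_comm]
  refine Finset.sum_congr rfl fun i _ => Finset.sum_congr rfl fun σ _ => ?_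
  rw [← Finset.mul_prod_erase _ _ (Finset.mem_univ i), updateCol_self,
    Finset.prod_congr rfl fun j hj => updateCol_ne (Finset.ne_of_mem_erase hj), smul_eq_mul]
  ring

theorem hasDerivAt_log_det {M : ℝ → Matrix n n ℝ} {M' : Matrix n n ℝ} {t₀ : ℝ}
    (hM : ∀ i j, HasDerivAt (fun t => M t i j) (M' i j) t₀) (hdet : (M t₀).det ≠ 0) :
    HasDerivAt (fun t => Real.log (M t).det) ((M t₀)⁻¹ * M').trace t₀ := by
  refine ((hasDerivAt_det hM).log hdet).congr_deriv ?_
  rw [inv_def, Ring.inverse_eq_inv, smul_mul_assoc, trace_smul, smul_eq_mul, div_eq_inv_mul]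

section Differentiable

variable {α : Type*} [NormedAddCommGroup α] [NormedSpace ℝ α] {M : α → Matrix n n ℝ} {x : α}

theorem differentiableAt_det (hM : ∀ i j, DifferentiableAt ℝ (fun a => M a i j) x) :
    DifferentiableAt ℝ (fun a => (M a).det) x := by
  simp only [det_apply]
  fun_prop

theorem differentiableAt_inv_apply (hM : ∀ i j, DifferentiableAt ℝ (fun a => M a i j) x)
    (hdet : (M x).det ≠ 0) (i j : n) :
    DifferentiableAt ℝ (fun a => (M a)⁻¹ i j) x := by
  simp only [inv_def, Ring.inverse_eq_inv, smul_apply, smul_eq_mul, adjugate_apply]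
  refine ((differentiableAt_det hM).inv hdet).mul (differentiableAt_det fun k l => ?_)
  by_cases hk : k = j
  · simp [hk]
  · simpa [hk] using hM k l

end Differentiable

theorem hasDerivAt_inv_apply {M : ℝ → Matrix n n ℝ} {M' : Matrix n n ℝ} {t₀ : ℝ}
    (hM : ∀ i j, HasDerivAt (fun t => M t i j) (M' i j) t₀) (hdet : (M t₀).det ≠ 0) (i j : n) :
    HasDerivAt (fun t => (M t)⁻¹ i j) ((-((M t₀)⁻¹ * M' * (M t₀)⁻¹)) i j) t₀ := by
  have hdiff := fun i j => (hM i j).differentiableAt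
  set G : Matrix n n ℝ := of fun i j => deriv (fun t => (M t)⁻¹ i j) t₀
  have hG : ∀ i j, HasDerivAt (fun t => (M t)⁻¹ i j) (G i j) t₀ := fun i j =>
    (differentiableAt_inv_apply hdiff hdet i j).hasDerivAt
  -- differentiate `M t * (M t)⁻¹ = 1`, which holds near `t₀`
  have hone : ∀ᶠ t in nhds t₀, M t * (M t)⁻¹ = 1 := by
    filter_upwards [(differentiableAt_det hdiff).continuousAt.eventually_ne hdet] with t ht
    exact mul_nonsing_inv _ (isUnit_iff_ne_zero.mpr ht)
  have hzero : M' * (M t₀)⁻¹ + M t₀ * G = 0 := by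
    ext k l
    refine (hasDerivAt_mul_apply hM hG k l).unique
      ((hasDerivAt_const t₀ ((1 : Matrix n n ℝ) k l)).congr_of_eventuallyEq ?_)
    filter_upwards [hone] with t ht
    rw [ht]
  have hunit : IsUnit (M t₀).det := isUnit_iff_ne_zero.mpr hdet
  have hG_eq : G = -((M t₀)⁻¹ * M' * (M t₀)⁻¹) := by
    rw [← nonsing_inv_mul_cancel_left (A := M t₀) G hunit, eq_neg_of_add_eq_zero_right hzero,
      Matrix.mul_neg, Matrix.mul_assoc]
  rw [← hG_eq]
  exact hG i j

end Matrix

section SecondMoments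

variable {Ω ι n : Type*} [Fintype ι] [Fintype n]

variable [MeasurableSpace Ω] {μ : Measure Ω}

theorem ProbabilityTheory.iIndepFun.integral_mul_eq_zero_of_ne {κ : Type*} {z : κ → Ω → ℝ}
    (h : iIndepFun z μ) (hz : ∀ k, AEStronglyMeasurable (z k) μ) {k l : κ}
    (hk : ∫ ω, z k ω ∂μ = 0) (hkl : k ≠ l) :
    ∫ ω, z k ω * z l ω ∂μ = 0 :=
  ((h.indepFun hkl).integral_mul_eq_mul_integral (hz k) (hz l)).trans (by rw [hk, zero_mul])

variable [IsFiniteMeasure μ] {ξ : Ω → ι → ℝ}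

theorem integrable_dotProduct_mulVec_add_mulVec (hξ : ∀ k, MemLp (fun ω => ξ ω k) 2 μ)
    (m : n → ℝ) (A B : Matrix n ι ℝ) :
    Integrable (fun ω => (m + A *ᵥ ξ ω) ⬝ᵥ (B *ᵥ ξ ω)) μ := by
  have h2 : ∀ k l, Integrable (fun ω => ξ ω k * ξ ω l) μ := fun k l => (hξ k).integrable_mul (hξ l)
  simp_rw [dotProduct_mulVec_add_mulVec, dotProduct]
  exact .add (integrable_finsetSum _ fun k _ => ((hξ k).integrable one_le_two).const_mul _)
    (integrable_finsetSum _ fun k _ => integrable_finsetSum _ fun l _ => (h2 k l).const_mul _)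

theorem integral_dotProduct_mulVec_add_mulVec (hξ : ∀ k, MemLp (fun ω => ξ ω k) 2 μ)
    (hmean : ∀ k, ∫ ω, ξ ω k ∂μ = 0) {C : Matrix ι ι ℝ}
    (hcov : ∀ k l, ∫ ω, ξ ω k * ξ ω l ∂μ = C k l) (m : n → ℝ) (A B : Matrix n ι ℝ) :
    ∫ ω, (m + A *ᵥ ξ ω) ⬝ᵥ (B *ᵥ ξ ω) ∂μ = (A * C * Bᵀ).trace := by
  have h1 : ∀ k, Integrable (fun ω => ξ ω k) μ := fun k => (hξ k).integrable one_le_two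
  have h2 : ∀ k l, Integrable (fun ω => ξ ω k * ξ ω l) μ := fun k l => (hξ k).integrable_mul (hξ l)
  have hlin : Integrable (fun ω => (m ᵥ* B) ⬝ᵥ ξ ω) μ :=
    integrable_finsetSum _ fun k _ => (h1 k).const_mul _
  have hquad : Integrable (fun ω => ∑ k, ∑ l, (Aᵀ * B) k l * (ξ ω k * ξ ω l)) μ :=
    integrable_finsetSum _ fun k _ => integrable_finsetSum _ fun l _ => (h2 k l).const_mul _
  have hlin0 : ∫ ω, (m ᵥ* B) ⬝ᵥ ξ ω ∂μ = 0 := by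
    simp only [dotProduct]
    rw [integral_finsetSum _ fun k _ => (h1 k).const_mul _]
    simp [integral_const_mul, hmean]
  have hquad0 : ∫ ω, ∑ k, ∑ l, (Aᵀ * B) k l * (ξ ω k * ξ ω l) ∂μ
      = (Aᵀ * B * Cᵀ).trace := by
    rw [integral_finsetSum (f := fun k ω => ∑ l, (Aᵀ * B) k l * (ξ ω k * ξ ω l)) _
      fun k _ => integrable_finsetSum _ fun l _ => (h2 k l).const_mul _]
    refine Finset.sum_congr rfl fun k _ => ?_
    rw [integral_finsetSum _ fun l _ => (h2 k l).const_mul _]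
    simp only [integral_const_mul, hcov]
    rfl
  simp_rw [dotProduct_mulVec_add_mulVec]
  rw [integral_add hlin hquad, hlin0, hquad0, zero_add, ← trace_transpose]
  simp only [transpose_mul, transpose_transpose]
  rw [trace_mul_comm, Matrix.mul_assoc, trace_mul_comm]

end SecondMoments

namespace PSAR

section Model

variable {N : ℕ} (W : Matrix (Fin N) (Fin N) ℝ) (lam2 : ℝ)

/-- `Ω̇`: the derivative of `Ω(ρ, σ²)` along a path with `ρ' = a`, `(σ²)' = c`. -/
noncomputable def OmatDeriv (ρ a c : ℝ) : Matrix (Fin N) (Fin N) ℝ :=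
  c • 1 - (a * lam2) • WSmat W ρ

theorem Omat_isSymm (ρ σ2 : ℝ) : (Omat W lam2 ρ σ2).IsSymm := by
  simp [IsSymm, Omat, transpose_mul]

theorem Omat_posDef {ρ σ2 : ℝ} (hσ : 0 < σ2) (hlam : 0 ≤ lam2) : (Omat W lam2 ρ σ2).PosDef := by
  simpa [Omat] using (PosDef.one.smul hσ).add_posSemidef
    ((posSemidef_self_mul_conjTranspose (Smat W ρ)).smul hlam)

/-- `U(ρ) = [I_N | S(ρ)]`, so that `S(ρ₀) Y* − X β₀ = E + S(ρ₀) ε = U(ρ₀) (E, ε)`. -/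
noncomputable def Umat (ρ : ℝ) : Matrix (Fin N) (Fin N ⊕ Fin N) ℝ :=
  fromCols 1 (Smat W ρ)

theorem Umat_mul_diagonal_mul_transpose (ρ σ2 : ℝ) :
    Umat W ρ * diagonal (Sum.elim (fun _ : Fin N => σ2) fun _ : Fin N => lam2) * (Umat W ρ)ᵀ
      = Omat W lam2 ρ σ2 := by
  rw [Umat, ← fromBlocks_diagonal, fromCols_mul_fromBlocks, transpose_fromCols,
    fromCols_mul_fromRows]
  simp [Omat, ← smul_one_eq_diagonal]

theorem hasDerivAt_Smat_apply {ρ : ℝ → ℝ} {a t₀ : ℝ} (hρ : HasDerivAt ρ a t₀) (i j : Fin N) :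
    HasDerivAt (fun t => Smat W (ρ t) i j) (((-a) • W) i j) t₀ := by
  simp only [Smat, Matrix.sub_apply, Matrix.smul_apply, smul_eq_mul]
  simpa using (hρ.mul_const (W i j)).const_sub ((1 : Matrix (Fin N) (Fin N) ℝ) i j)

theorem hasDerivAt_Omat_apply {ρ σ2 : ℝ → ℝ} {a c t₀ : ℝ} (hρ : HasDerivAt ρ a t₀)
    (hσ : HasDerivAt σ2 c t₀) (i j : Fin N) :
    HasDerivAt (fun t => Omat W lam2 (ρ t) (σ2 t) i j) (OmatDeriv W lam2 (ρ t₀) a c i j) t₀ := by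
  have hS := hasDerivAt_Smat_apply W hρ
  have hSSt := hasDerivAt_mul_apply (B := fun t => (Smat W (ρ t))ᵀ) (B' := ((-a) • W)ᵀ) hS
    (fun k l => hS l k) i j
  simp only [Omat, Matrix.add_apply, Matrix.smul_apply, smul_eq_mul]
  refine ((hσ.mul_const _).add (hSSt.const_mul lam2)).congr_deriv ?_
  simp [OmatDeriv, WSmat]
  ring

variable {p1 p2 : ℕ} (X : Matrix (Fin N) (Fin p1 ⊕ Fin p2) ℝ) (Ys : Fin N → ℝ)

theorem differentiableAt_nll {θ : ℝ × (Fin p1 ⊕ Fin p2 → ℝ) × ℝ}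
    (hS : (Smat W θ.1).det ≠ 0) (hO : (Omat W lam2 θ.1 θ.2.2).det ≠ 0) :
    DifferentiableAt ℝ (fun θ : ℝ × (Fin p1 ⊕ Fin p2 → ℝ) × ℝ =>
      nll W lam2 X Ys θ.1 θ.2.1 θ.2.2) θ := by
  have hSe : ∀ i j, DifferentiableAt ℝ
      (fun θ : ℝ × (Fin p1 ⊕ Fin p2 → ℝ) × ℝ => Smat W θ.1 i j) θ := by
    simp only [Smat, Matrix.sub_apply, Matrix.smul_apply, smul_eq_mul]
    fun_prop
  have hOe : ∀ i j, DifferentiableAt ℝ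
      (fun θ : ℝ × (Fin p1 ⊕ Fin p2 → ℝ) × ℝ => Omat W lam2 θ.1 θ.2.2 i j) θ := by
    simp only [Omat, Matrix.add_apply, Matrix.smul_apply, smul_eq_mul, mul_apply, transpose_apply]
    fun_prop
  have hdetS := differentiableAt_det hSe
  have hdetO := differentiableAt_det hOe
  have hres : ∀ i, DifferentiableAt ℝ (fun θ : ℝ × (Fin p1 ⊕ Fin p2 → ℝ) × ℝ =>
      (Smat W θ.1 *ᵥ Ys - X *ᵥ θ.2.1) i) θ := by
    simp only [Pi.sub_apply, mulVec, dotProduct, Smat, Matrix.sub_apply, Matrix.smul_apply,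
      smul_eq_mul]
    fun_prop
  have hquad := differentiableAt_dotProduct_mulVec (differentiableAt_inv_apply hOe hO) hres
  simp only [nll]
  fun_prop (disch := assumption)

/-- `∇L(ρ, β, σ²) · (a, b, c)` in closed form. -/
noncomputable def nllDirDeriv (ρ : ℝ) (β : Fin p1 ⊕ Fin p2 → ℝ) (σ2 a : ℝ)
    (b : Fin p1 ⊕ Fin p2 → ℝ) (c : ℝ) : ℝ :=
  a * ((Smat W ρ)⁻¹ * W).trace + 1 / 2 * ((Omat W lam2 ρ σ2)⁻¹ * OmatDeriv W lam2 ρ a c).trace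
    + (-(a • (W *ᵥ Ys)) - X *ᵥ b) ⬝ᵥ ((Omat W lam2 ρ σ2)⁻¹ *ᵥ (Smat W ρ *ᵥ Ys - X *ᵥ β))
    - 1 / 2 * (Smat W ρ *ᵥ Ys - X *ᵥ β) ⬝ᵥ
        (((Omat W lam2 ρ σ2)⁻¹ * OmatDeriv W lam2 ρ a c * (Omat W lam2 ρ σ2)⁻¹) *ᵥ
          (Smat W ρ *ᵥ Ys - X *ᵥ β))

theorem hasLineDerivAt_nll {θ v : ℝ × (Fin p1 ⊕ Fin p2 → ℝ) × ℝ}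
    (hS : (Smat W θ.1).det ≠ 0) (hO : (Omat W lam2 θ.1 θ.2.2).det ≠ 0) :
    HasLineDerivAt ℝ (fun θ : ℝ × (Fin p1 ⊕ Fin p2 → ℝ) × ℝ => nll W lam2 X Ys θ.1 θ.2.1 θ.2.2)
      (nllDirDeriv W lam2 X Ys θ.1 θ.2.1 θ.2.2 v.1 v.2.1 v.2.2) θ v := by
  obtain ⟨ρ, β, σ2⟩ := θ
  obtain ⟨a, b, c⟩ := v
  show HasDerivAt (fun t : ℝ => nll W lam2 X Ys (ρ + t * a) (β + t • b) (σ2 + t * c)) _ 0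
  have hρ : HasDerivAt (fun t : ℝ => ρ + t * a) a 0 := by
    simpa using ((hasDerivAt_id (0 : ℝ)).mul_const a).const_add ρ
  have hσ : HasDerivAt (fun t : ℝ => σ2 + t * c) c 0 := by
    simpa using ((hasDerivAt_id (0 : ℝ)).mul_const c).const_add σ2
  have hSt := hasDerivAt_Smat_apply W hρ
  have hOt := hasDerivAt_Omat_apply W lam2 hρ hσ
  simp only [zero_mul, add_zero] at hOt
  have hres : HasDerivAt (fun t : ℝ => Smat W (ρ + t * a) *ᵥ Ys - X *ᵥ (β + t • b))
      (-(a • (W *ᵥ Ys)) - X *ᵥ b) 0 := by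
    have hline : (fun t : ℝ => Smat W (ρ + t * a) *ᵥ Ys - X *ᵥ (β + t • b))
        = fun t => (Smat W ρ *ᵥ Ys - X *ᵥ β) + t • (-(a • (W *ᵥ Ys)) - X *ᵥ b) := by
      funext t
      simp only [Smat, add_smul, sub_mulVec, add_mulVec, smul_mulVec, mulVec_add, mulVec_smul,
        mul_smul]
      module
    rw [hline]
    simpa using ((hasDerivAt_id (0 : ℝ)).smul_const _).const_add (Smat W ρ *ᵥ Ys - X *ᵥ β)
  have hlogS := hasDerivAt_log_det hSt (by simpa using hS)
  have hlogO := hasDerivAt_log_det hOt (by simpa using hO)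
  have hquad := hasDerivAt_dotProduct_mulVec (hasDerivAt_inv_apply hOt (by simpa using hO)) hres
  simp only [zero_mul, add_zero, zero_smul] at hlogS hlogO hquad
  refine ((hlogS.neg.add (hlogO.const_mul (1 / 2))).add (hquad.const_mul (1 / 2))).congr_deriv ?_
  rw [(Omat_isSymm W lam2 ρ σ2).inv.dotProduct_mulVec_comm (Smat W ρ *ᵥ Ys - X *ᵥ β)]
  simp only [nllDirDeriv, Matrix.mul_smul, trace_smul, smul_eq_mul, neg_mulVec, dotProduct_neg]
  ring

theorem Yobs_eq_inv_mulVec {ρ0 : ℝ} (hS : IsUnit (Smat W ρ0).det) (β0 : Fin p1 ⊕ Fin p2 → ℝ)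
    (e f : Fin N → ℝ) :
    Yobs W ρ0 X β0 e f = (Smat W ρ0)⁻¹ *ᵥ (X *ᵥ β0 + Umat W ρ0 *ᵥ Sum.elim e f) := by
  rw [Umat, fromCols_mulVec_sumElim, one_mulVec, Yobs, ← add_assoc,
    mulVec_add (Smat W ρ0)⁻¹ _ (_ *ᵥ f), mulVec_mulVec, nonsing_inv_mul _ hS, one_mulVec]

-- `0 + U z` has the shape `m + A z` of `integral_dotProduct_mulVec_add_mulVec`.
theorem nllDirDeriv_Yobs {ρ0 : ℝ} (hS : IsUnit (Smat W ρ0).det) (β0 : Fin p1 ⊕ Fin p2 → ℝ)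
    (σ02 a : ℝ) (b : Fin p1 ⊕ Fin p2 → ℝ) (c : ℝ) (z : Fin N ⊕ Fin N → ℝ) :
    nllDirDeriv W lam2 X (Yobs W ρ0 X β0 (z ∘ Sum.inl) (z ∘ Sum.inr)) ρ0 β0 σ02 a b c
      = a * ((Smat W ρ0)⁻¹ * W).trace
          + 1 / 2 * ((Omat W lam2 ρ0 σ02)⁻¹ * OmatDeriv W lam2 ρ0 a c).trace
        + (-(a • (W *ᵥ ((Smat W ρ0)⁻¹ *ᵥ (X *ᵥ β0)))) - X *ᵥ b
            + (-a • (W * (Smat W ρ0)⁻¹ * Umat W ρ0)) *ᵥ z)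
          ⬝ᵥ (((Omat W lam2 ρ0 σ02)⁻¹ * Umat W ρ0) *ᵥ z)
        - 1 / 2 * (0 + Umat W ρ0 *ᵥ z) ⬝ᵥ (((Omat W lam2 ρ0 σ02)⁻¹ * OmatDeriv W lam2 ρ0 a c
            * (Omat W lam2 ρ0 σ02)⁻¹ * Umat W ρ0) *ᵥ z) := by
  have hres : Smat W ρ0 *ᵥ ((Smat W ρ0)⁻¹ *ᵥ (X *ᵥ β0 + Umat W ρ0 *ᵥ z)) - X *ᵥ β0
      = 0 + Umat W ρ0 *ᵥ z := by
    rw [mulVec_mulVec, mul_nonsing_inv _ hS, one_mulVec]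
    abel
  have hres' : -(a • (W *ᵥ ((Smat W ρ0)⁻¹ *ᵥ (X *ᵥ β0 + Umat W ρ0 *ᵥ z)))) - X *ᵥ b
      = -(a • (W *ᵥ ((Smat W ρ0)⁻¹ *ᵥ (X *ᵥ β0)))) - X *ᵥ b
        + (-a • (W * (Smat W ρ0)⁻¹ * Umat W ρ0)) *ᵥ z := by
    simp only [mulVec_add, mulVec_mulVec, smul_mulVec, Matrix.mul_assoc]
    module
  rw [nllDirDeriv, Yobs_eq_inv_mulVec W X hS, Sum.elim_comp_inl_inr, hres, hres']
  simp only [zero_add, mulVec_mulVec]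

theorem integral_nllDirDeriv_eq_zero {Ωs : Type*} [MeasurableSpace Ωs] {μ : Measure Ωs}
    [IsProbabilityMeasure μ] {ρ0 σ02 : ℝ} {β0 : Fin p1 ⊕ Fin p2 → ℝ}
    (hS : (Smat W ρ0).det ≠ 0) (hO : (Omat W lam2 ρ0 σ02).det ≠ 0)
    {ξ : Ωs → Fin N ⊕ Fin N → ℝ} (hξ : ∀ k, MemLp (fun ω => ξ ω k) 2 μ)
    (hmean : ∀ k, ∫ ω, ξ ω k ∂μ = 0)
    (hcov : ∀ k l, ∫ ω, ξ ω k * ξ ω l ∂μ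
      = diagonal (Sum.elim (fun _ : Fin N => σ02) fun _ : Fin N => lam2) k l)
    (a : ℝ) (b : Fin p1 ⊕ Fin p2 → ℝ) (c : ℝ) :
    ∫ ω, nllDirDeriv W lam2 X (Yobs W ρ0 X β0 (ξ ω ∘ Sum.inl) (ξ ω ∘ Sum.inr)) ρ0 β0 σ02 a b c ∂μ
      = 0 := by
  have hint := integrable_dotProduct_mulVec_add_mulVec (μ := μ) (n := Fin N) hξ
  simp_rw [nllDirDeriv_Yobs W lam2 X (isUnit_iff_ne_zero.mpr hS)]
  rw [integral_sub, integral_add, integral_const, integral_const_mul,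
    integral_dotProduct_mulVec_add_mulVec hξ hmean hcov,
    integral_dotProduct_mulVec_add_mulVec hξ hmean hcov]
  · have hcovU := Umat_mul_diagonal_mul_transpose W lam2 ρ0 σ02
    have hOsymm := Omat_isSymm W lam2 ρ0 σ02
    have hOu : IsUnit (Omat W lam2 ρ0 σ02).det := isUnit_iff_ne_zero.mpr hO
    set S := Smat W ρ0
    set O := Omat W lam2 ρ0 σ02
    set Odot := OmatDeriv W lam2 ρ0 a c
    set U := Umat W ρ0
    set D := diagonal (Sum.elim (fun _ : Fin N => σ02) fun _ : Fin N => lam2)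
    have hE1 : (-a • (W * S⁻¹ * U)) * D * (O⁻¹ * U)ᵀ = -a • (W * S⁻¹) := by
      rw [transpose_mul, hOsymm.inv.eq, Matrix.smul_mul, Matrix.smul_mul]
      congr 1
      calc W * S⁻¹ * U * D * (Uᵀ * O⁻¹) = W * S⁻¹ * (U * D * Uᵀ) * O⁻¹ := by
            simp only [Matrix.mul_assoc]
        _ = W * S⁻¹ := by rw [hcovU, Matrix.mul_assoc, mul_nonsing_inv _ hOu, Matrix.mul_one]
    have hE2 : (U * D * (O⁻¹ * Odot * O⁻¹ * U)ᵀ).trace = (O⁻¹ * Odot).trace := by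
      calc (U * D * (O⁻¹ * Odot * O⁻¹ * U)ᵀ).trace = (O * (O⁻¹ * Odot * O⁻¹)ᵀ).trace := by
            rw [← hcovU, transpose_mul]
            simp only [Matrix.mul_assoc]
        _ = (O⁻¹ * Odot * O⁻¹ * O).trace := by
            rw [← trace_transpose, transpose_mul, transpose_transpose, hOsymm.eq]
        _ = (O⁻¹ * Odot).trace := by
            rw [Matrix.mul_assoc (O⁻¹ * Odot), nonsing_inv_mul _ hOu, Matrix.mul_one]
    rw [hE1, hE2, trace_smul, trace_mul_comm W, probReal_univ, one_smul, smul_eq_mul]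
    ring
  · exact integrable_const _
  · exact hint _ _ _
  · exact (integrable_const _).add (hint _ _ _)
  · exact (hint _ _ _).const_mul _

theorem integral_noiseFam_mul {Ω : Type*} [MeasurableSpace Ω] {μ : Measure Ω} {σ02 : ℝ}
    {E ε : Ω → Fin N → ℝ} {Ex : Ω → Fin N → Fin p2 → ℝ} (hindep : iIndepFun (noiseFam E ε Ex) μ)
    (hmom : ∀ z, MemLp (noiseFam E ε Ex z) 4 μ) (hmean : ∀ z, ∫ ω, noiseFam E ε Ex z ω ∂μ = 0)
    (hEvar : ∀ i, ∫ ω, (E ω i) ^ 2 ∂μ = σ02) (hepsvar : ∀ i, ∫ ω, (ε ω i) ^ 2 ∂μ = lam2)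
    (k l : Fin N ⊕ Fin N) :
    ∫ ω, noiseFam E ε Ex (Sum.map id Sum.inl k) ω * noiseFam E ε Ex (Sum.map id Sum.inl l) ω ∂μ
      = diagonal (Sum.elim (fun _ : Fin N => σ02) fun _ : Fin N => lam2) k l := by
  obtain rfl | hkl := eq_or_ne k l
  · rw [diagonal_apply_eq]
    cases k with
    | inl i => simpa [noiseFam, pow_two] using hEvar i
    | inr i => simpa [noiseFam, pow_two] using hepsvar i
  · rw [diagonal_apply_ne _ hkl]
    exact (hindep.precomp (Sum.map_injective.mpr ⟨Function.injective_id, Sum.inl_injective⟩))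
      |>.integral_mul_eq_zero_of_ne (fun _ => (hmom _).aestronglyMeasurable) (hmean _) hkl

end Model

theorem statement_0_general
    {Ωs : Type*} [MeasurableSpace Ωs] (μ : Measure Ωs) [IsProbabilityMeasure μ]
    (N p1 p2 : ℕ)
    (W : Matrix (Fin N) (Fin N) ℝ)
    (X : Matrix (Fin N) (Fin p1 ⊕ Fin p2) ℝ)
    (ρ0 : ℝ) (β0 : Fin p1 ⊕ Fin p2 → ℝ) (σ02 lam2 : ℝ)
    (hσ : 0 < σ02) (hlam : 0 < lam2)
    (hS0 : 0 < (Smat W ρ0).det)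
    (E ε : Ωs → Fin N → ℝ) (Ex : Ωs → Fin N → Fin p2 → ℝ)
    (hindep : iIndepFun (noiseFam E ε Ex) μ)
    (hmom : ∀ z, MemLp (noiseFam E ε Ex z) 4 μ)
    (hmean : ∀ z, ∫ ω, noiseFam E ε Ex z ω ∂μ = 0)
    (hEvar : ∀ i, ∫ ω, (E ω i) ^ 2 ∂μ = σ02)
    (hepsvar : ∀ i, ∫ ω, (ε ω i) ^ 2 ∂μ = lam2) :
    (∀ ω, DifferentiableAt ℝ
        (fun θ : ℝ × ((Fin p1 ⊕ Fin p2) → ℝ) × ℝ =>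
          nll W lam2 X (Yobs W ρ0 X β0 (E ω) (ε ω)) θ.1 θ.2.1 θ.2.2) (ρ0, β0, σ02)) ∧
      ∀ v : ℝ × ((Fin p1 ⊕ Fin p2) → ℝ) × ℝ,
        ∫ ω, fderiv ℝ
            (fun θ : ℝ × ((Fin p1 ⊕ Fin p2) → ℝ) × ℝ =>
              nll W lam2 X (Yobs W ρ0 X β0 (E ω) (ε ω)) θ.1 θ.2.1 θ.2.2) (ρ0, β0, σ02) v ∂μ = 0
  := by
  have hS : (Smat W ρ0).det ≠ 0 := hS0.ne'
  have hO : (Omat W lam2 ρ0 σ02).det ≠ 0 := (Omat_posDef W lam2 hσ hlam.le).det_pos.ne'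
  have hdiff := fun ω =>
    differentiableAt_nll W lam2 X (Yobs W ρ0 X β0 (E ω) (ε ω)) (θ := (ρ0, β0, σ02)) hS hO
  refine ⟨hdiff, fun v => ?_⟩
  -- `(E, ε)` as a single noise vector, a subfamily of `noiseFam E ε Ex`
  let ξ : Ωs → Fin N ⊕ Fin N → ℝ := fun ω k => noiseFam E ε Ex (Sum.map id Sum.inl k) ω
  calc _ = ∫ ω, nllDirDeriv W lam2 X (Yobs W ρ0 X β0 (ξ ω ∘ Sum.inl) (ξ ω ∘ Sum.inr))
          ρ0 β0 σ02 v.1 v.2.1 v.2.2 ∂μ := by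
        refine integral_congr_ae (ae_of_all _ fun ω => ?_)
        exact (hdiff ω).lineDeriv_eq_fderiv.symm.trans
          (hasLineDerivAt_nll W lam2 X _ (θ := (ρ0, β0, σ02)) hS hO).lineDeriv
    _ = 0 := integral_nllDirDeriv_eq_zero W lam2 X hS hO
        (fun _ => (hmom _).mono_exponent (by norm_num)) (fun _ => hmean _)
        (integral_noiseFam_mul lam2 hindep hmom hmean hEvar hepsvar) _ _ _

theorem statement_0
    {Ωs : Type*} [MeasurableSpace Ωs] (μ : Measure Ωs) [IsProbabilityMeasure μ]
    (N p1 p2 : ℕ) (hN : 0 < N) (hp1 : 0 < p1) (hp2 : 0 < p2)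
    (W : Matrix (Fin N) (Fin N) ℝ) (hW : ∀ i, W i i = 0)
    (X : Matrix (Fin N) (Fin p1 ⊕ Fin p2) ℝ)
    (ρ0 : ℝ) (β0 : Fin p1 ⊕ Fin p2 → ℝ) (σ02 lam2 lamx2 : ℝ)
    (hσ : 0 < σ02) (hlam : 0 < lam2) (hlamx : 0 < lamx2)
    (hS0 : 0 < (Smat W ρ0).det)
    (E ε : Ωs → Fin N → ℝ) (Ex : Ωs → Fin N → Fin p2 → ℝ)
    (hindep : iIndepFun (noiseFam E ε Ex) μ)
    (hmom : ∀ z, MemLp (noiseFam E ε Ex z) 4 μ)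
    (hmean : ∀ z, ∫ ω, noiseFam E ε Ex z ω ∂μ = 0)
    (hEvar : ∀ i, ∫ ω, (E ω i) ^ 2 ∂μ = σ02)
    (hepsvar : ∀ i, ∫ ω, (ε ω i) ^ 2 ∂μ = lam2)
    (hExvar : ∀ i j, ∫ ω, (Ex ω i j) ^ 2 ∂μ = lamx2) :
    (∀ ω, DifferentiableAt ℝ
        (fun θ : ℝ × ((Fin p1 ⊕ Fin p2) → ℝ) × ℝ =>
          nll W lam2 X (Yobs W ρ0 X β0 (E ω) (ε ω)) θ.1 θ.2.1 θ.2.2) (ρ0, β0, σ02)) ∧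
      ∀ v : ℝ × ((Fin p1 ⊕ Fin p2) → ℝ) × ℝ,
        ∫ ω, fderiv ℝ
            (fun θ : ℝ × ((Fin p1 ⊕ Fin p2) → ℝ) × ℝ =>
              nll W lam2 X (Yobs W ρ0 X β0 (E ω) (ε ω)) θ.1 θ.2.1 θ.2.2) (ρ0, β0, σ02) v ∂μ = 0 :=
  statement_0_general μ N p1 p2 W X ρ0 β0 σ02 lam2 hσ hlam hS0 E ε Ex hindep hmom hmean hEvar
    hepsvar

end PSAR
end

section
/- The expected β-gradient of the noisy-covariate negative log-likelihood at the true parameter equals the explicit bias vector: E[∇_β L*(θ0)] = (0_{p1}ᵀ, λx² tr(Ω0⁻¹) β02ᵀ)ᵀ ∈ ℝ^p. -/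
/-! At β0 the directional derivative of L* along eⱼ is −(X* eⱼ)ᵀ Ω0⁻¹ r with
r = S0 Y* − X* β0 = E + S0 ε − Ex β02, a fixed linear combination of the noise entries.
Independent centred entries are uncorrelated, so the deterministic part X eⱼ contributes nothing
in expectation. When eⱼ picks the k-th coordinate of β02, the noise column (Exᵢₖ)ᵢ of X* is
correlated only with the term −Ex β02 of r, and only in the same row, with covariance
−λx² β02ₖ; summing against Ω0⁻¹ gives −λx² tr(Ω0⁻¹) β02ₖ. -/

open MeasureTheory ProbabilityTheory Matrix
open scoped Matrix

namespace PSAR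

section Uncorrelated

variable {Ω ι κ : Type*} [MeasurableSpace Ω] {μ : Measure Ω} [Fintype ι] {F : ι → Ω → ℝ}

lemma integrable_dotProduct (hint : ∀ z, Integrable (F z) μ) (v : ι → ℝ) :
    Integrable (fun ω => v ⬝ᵥ fun z => F z ω) μ :=
  integrable_finsetSum _ fun z _ => (hint z).const_mul (v z)

lemma integral_dotProduct_eq_zero (hint : ∀ z, Integrable (F z) μ)
    (hmean : ∀ z, ∫ ω, F z ω ∂μ = 0) (v : ι → ℝ) :
    ∫ ω, v ⬝ᵥ (fun z => F z ω) ∂μ = 0 := by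
  simp only [dotProduct]
  rw [integral_finsetSum _ fun z _ => (hint z).const_mul _]
  simp [integral_const_mul, hmean]

lemma integrable_mul_dotProduct (hF : ∀ z, MemLp (F z) 2 μ) (z₀ : ι) (v : ι → ℝ) :
    Integrable (fun ω => F z₀ ω * (v ⬝ᵥ fun z => F z ω)) μ := by
  simp_rw [dotProduct, Finset.mul_sum, mul_left_comm (F z₀ _)]
  exact integrable_finsetSum _ fun z _ => ((hF z₀).integrable_mul (hF z)).const_mul _

lemma integral_mul_dotProduct (hF : ∀ z, MemLp (F z) 2 μ)
    (horth : Pairwise fun z z' => ∫ ω, F z ω * F z' ω ∂μ = 0) (z₀ : ι) (v : ι → ℝ) :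
    ∫ ω, F z₀ ω * (v ⬝ᵥ fun z => F z ω) ∂μ = v z₀ * ∫ ω, F z₀ ω ^ 2 ∂μ := by
  have hint : ∀ z, Integrable (fun ω => v z * (F z₀ ω * F z ω)) μ :=
    fun z => ((hF z₀).integrable_mul (hF z)).const_mul _
  simp_rw [dotProduct, Finset.mul_sum, mul_left_comm (F z₀ _)]
  rw [integral_finsetSum _ fun z _ => hint z, Finset.sum_eq_single z₀]
  · simp_rw [integral_const_mul, sq]
  · intro z _ hz
    rw [integral_const_mul, horth (Ne.symm hz), mul_zero]
  · simp

lemma integral_add_comp_dotProduct_mulVec [IsFiniteMeasure μ] [Fintype κ]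
    (hF : ∀ z, MemLp (F z) 2 μ) (horth : Pairwise fun z z' => ∫ ω, F z ω * F z' ω ∂μ = 0)
    (hmean : ∀ z, ∫ ω, F z ω ∂μ = 0) (x : κ → ℝ) (g : κ → ι) (B : Matrix κ ι ℝ) :
    ∫ ω, (x + fun i => F (g i) ω) ⬝ᵥ (B *ᵥ fun z => F z ω) ∂μ
      = ∑ i, B i (g i) * ∫ ω, F (g i) ω ^ 2 ∂μ := by
  have hint : ∀ z, Integrable (F z) μ := fun z => (hF z).integrable one_le_two
  have hrow : ∀ i, Integrable (fun ω => x i * (B i ⬝ᵥ fun z => F z ω)) μ :=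
    fun i => (integrable_dotProduct hint (B i)).const_mul (x i)
  have hsum : ∀ i, Integrable (fun ω => x i * (B i ⬝ᵥ fun z => F z ω)
      + F (g i) ω * (B i ⬝ᵥ fun z => F z ω)) μ :=
    fun i => (hrow i).add (integrable_mul_dotProduct hF (g i) (B i))
  change ∫ ω, ∑ i, (x i + F (g i) ω) * (B i ⬝ᵥ fun z => F z ω) ∂μ = _
  simp_rw [add_mul]
  rw [integral_finsetSum _ fun i _ => hsum i]
  refine Finset.sum_congr rfl fun i _ => ?_
  rw [integral_add (hrow i) (integrable_mul_dotProduct hF (g i) (B i)), integral_const_mul,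
    integral_dotProduct_eq_zero hint hmean, integral_mul_dotProduct hF horth, mul_zero, zero_add]

end Uncorrelated

lemma hasDerivAt_dotProduct_mulVec_sub_smul {n : Type*} [Fintype n] (A : Matrix n n ℝ)
    (x y : n → ℝ) (t : ℝ) :
    HasDerivAt (fun s : ℝ => (x - s • y) ⬝ᵥ (A *ᵥ (x - s • y)))
      (-(y ⬝ᵥ (A *ᵥ (x - t • y))) - (x - t • y) ⬝ᵥ (A *ᵥ y)) t := by
  have hexpand : ∀ s : ℝ, (x - s • y) ⬝ᵥ (A *ᵥ (x - s • y)) = x ⬝ᵥ (A *ᵥ x)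
      - s * (y ⬝ᵥ (A *ᵥ x) + x ⬝ᵥ (A *ᵥ y)) + s ^ 2 * (y ⬝ᵥ (A *ᵥ y)) := by
    intro s
    simp only [sub_dotProduct, dotProduct_sub, mulVec_sub, mulVec_smul, smul_dotProduct,
      dotProduct_smul, smul_eq_mul]
    ring
  simp_rw [hexpand]
  refine (((hasDerivAt_id t).mul_const _).const_sub _).add
    ((hasDerivAt_pow 2 t).mul_const _) |>.congr_deriv ?_
  simp only [sub_dotProduct, dotProduct_sub, mulVec_sub, mulVec_smul, smul_dotProduct,
    dotProduct_smul, smul_eq_mul]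
  ring

lemma Omat_transpose {N : ℕ} (W : Matrix (Fin N) (Fin N) ℝ) (lam2 ρ σ2 : ℝ) :
    (Omat W lam2 ρ σ2)ᵀ = Omat W lam2 ρ σ2 := by
  simp [Omat, transpose_add, transpose_smul, transpose_mul]

lemma hasDerivAt_nll_add_smul {N p1 p2 : ℕ} (W : Matrix (Fin N) (Fin N) ℝ) (lam2 : ℝ)
    (X : Matrix (Fin N) (Fin p1 ⊕ Fin p2) ℝ) (Ys : Fin N → ℝ) (ρ : ℝ)
    (β v : Fin p1 ⊕ Fin p2 → ℝ) (σ2 t : ℝ) :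
    HasDerivAt (fun s : ℝ => nll W lam2 X Ys ρ (β + s • v) σ2)
      (-((X *ᵥ v) ⬝ᵥ ((Omat W lam2 ρ σ2)⁻¹ *ᵥ (Smat W ρ *ᵥ Ys - X *ᵥ (β + t • v))))) t := by
  set M := (Omat W lam2 ρ σ2)⁻¹
  have hM : Mᵀ = M := by rw [transpose_nonsing_inv, Omat_transpose]
  have hres : ∀ s : ℝ, Smat W ρ *ᵥ Ys - X *ᵥ (β + s • v)
      = (Smat W ρ *ᵥ Ys - X *ᵥ β) - s • (X *ᵥ v) := by
    intro s
    rw [mulVec_add, mulVec_smul, sub_add_eq_sub_sub]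
  simp only [nll, hres]
  refine (((hasDerivAt_dotProduct_mulVec_sub_smul M _ (X *ᵥ v) t).const_mul (1 / 2)).const_add
    _).congr_deriv ?_
  rw [dotProduct_mulVec _ M (X *ᵥ v), ← mulVec_transpose, hM, dotProduct_comm]
  ring

lemma Xobs_mulVec {N p1 p2 : ℕ} (X : Matrix (Fin N) (Fin p1 ⊕ Fin p2) ℝ)
    (Ex : Fin N → Fin p2 → ℝ) (β : Fin p1 ⊕ Fin p2 → ℝ) :
    Xobs X Ex *ᵥ β = X *ᵥ β + of Ex *ᵥ (β ∘ Sum.inr) := by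
  rw [show Xobs X Ex = X + fromCols 0 (of Ex) from rfl, add_mulVec, fromCols_mulVec,
    zero_mulVec, zero_add]

lemma Xobs_col_inl {N p1 p2 : ℕ} (X : Matrix (Fin N) (Fin p1 ⊕ Fin p2) ℝ)
    (Ex : Fin N → Fin p2 → ℝ) (a : Fin p1) :
    (Xobs X Ex).col (Sum.inl a) = X.col (Sum.inl a) := by
  ext i
  simp [Xobs]

lemma Xobs_col_inr {N p1 p2 : ℕ} (X : Matrix (Fin N) (Fin p1 ⊕ Fin p2) ℝ)
    (Ex : Fin N → Fin p2 → ℝ) (k : Fin p2) :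
    (Xobs X Ex).col (Sum.inr k) = X.col (Sum.inr k) + fun i => Ex i k := by
  ext i
  simp [Xobs]

lemma Smat_mulVec_Yobs_sub_Xobs_mulVec {N p1 p2 : ℕ} (W : Matrix (Fin N) (Fin N) ℝ) (ρ0 : ℝ)
    (hS : IsUnit (Smat W ρ0).det) (X : Matrix (Fin N) (Fin p1 ⊕ Fin p2) ℝ)
    (β0 : Fin p1 ⊕ Fin p2 → ℝ) (E ε : Fin N → ℝ) (Ex : Fin N → Fin p2 → ℝ) :
    Smat W ρ0 *ᵥ Yobs W ρ0 X β0 E ε - Xobs X Ex *ᵥ β0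
      = E + Smat W ρ0 *ᵥ ε - of Ex *ᵥ (β0 ∘ Sum.inr) := by
  rw [Yobs, mulVec_add, mulVec_mulVec, mul_nonsing_inv _ hS, one_mulVec, Xobs_mulVec]
  abel

noncomputable def residualCoeff {N p2 : ℕ} (W : Matrix (Fin N) (Fin N) ℝ) (ρ0 : ℝ)
    (β02 : Fin p2 → ℝ) : Matrix (Fin N) (Fin N ⊕ Fin N ⊕ Fin N × Fin p2) ℝ :=
  fromCols 1 <|
    fromCols (Smat W ρ0) (-of fun l q => (1 : Matrix (Fin N) (Fin N) ℝ) l q.1 * β02 q.2)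

lemma residualCoeff_mulVec {N p2 : ℕ} (W : Matrix (Fin N) (Fin N) ℝ) (ρ0 : ℝ)
    (β02 : Fin p2 → ℝ) (E ε : Fin N → ℝ) (Ex : Fin N → Fin p2 → ℝ) :
    residualCoeff W ρ0 β02 *ᵥ Sum.elim E (Sum.elim ε fun q => Ex q.1 q.2)
      = E + Smat W ρ0 *ᵥ ε - of Ex *ᵥ β02 := by
  rw [residualCoeff, fromCols_mulVec_sumElim, fromCols_mulVec_sumElim, one_mulVec, neg_mulVec,
    ← sub_eq_add_neg, add_sub_assoc]
  congr 2
  ext l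
  simp [mulVec, dotProduct, Fintype.sum_prod_type, one_apply, mul_comm]

lemma mul_residualCoeff_apply_noise {N p2 : ℕ} (W M : Matrix (Fin N) (Fin N) ℝ) (ρ0 : ℝ)
    (β02 : Fin p2 → ℝ) (i : Fin N) (k : Fin p2) :
    (M * residualCoeff W ρ0 β02) i (Sum.inr (Sum.inr (i, k))) = -(M i i * β02 k) := by
  simp [residualCoeff, mul_apply, fromCols, one_apply]

lemma sum_mul_residualCoeff_apply_noise_mul {N p2 : ℕ} (W M : Matrix (Fin N) (Fin N) ℝ)
    (ρ0 : ℝ) (β02 : Fin p2 → ℝ) (k : Fin p2) (c : ℝ) :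
    ∑ i, (M * residualCoeff W ρ0 β02) i (Sum.inr (Sum.inr (i, k))) * c
      = -(c * trace M * β02 k) := by
  simp only [mul_residualCoeff_apply_noise, trace, diag, Finset.mul_sum, Finset.sum_mul,
    ← Finset.sum_neg_distrib]
  exact Finset.sum_congr rfl fun i _ => by ring

lemma deriv_nll_Yobs_Xobs {N p1 p2 : ℕ} (W : Matrix (Fin N) (Fin N) ℝ) (lam2 ρ0 σ2 : ℝ)
    (hS : IsUnit (Smat W ρ0).det) (X : Matrix (Fin N) (Fin p1 ⊕ Fin p2) ℝ)
    (β0 : Fin p1 ⊕ Fin p2 → ℝ) (E ε : Fin N → ℝ) (Ex : Fin N → Fin p2 → ℝ)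
    (j : Fin p1 ⊕ Fin p2) :
    deriv (fun t : ℝ => nll W lam2 (Xobs X Ex) (Yobs W ρ0 X β0 E ε) ρ0
        (β0 + t • (Pi.single j 1 : (Fin p1 ⊕ Fin p2) → ℝ)) σ2) 0
      = -((Xobs X Ex).col j ⬝ᵥ (((Omat W lam2 ρ0 σ2)⁻¹ * residualCoeff W ρ0 (β0 ∘ Sum.inr))
          *ᵥ Sum.elim E (Sum.elim ε fun q => Ex q.1 q.2))) := by
  rw [(hasDerivAt_nll_add_smul ..).deriv, zero_smul, add_zero,
    Smat_mulVec_Yobs_sub_Xobs_mulVec W ρ0 hS, ← residualCoeff_mulVec, mulVec_mulVec,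
    mulVec_single_one]

theorem statement_2_general
    {Ωs : Type*} [MeasurableSpace Ωs] (μ : Measure Ωs) [IsProbabilityMeasure μ]
    (N p1 p2 : ℕ)
    (W : Matrix (Fin N) (Fin N) ℝ)
    (X : Matrix (Fin N) (Fin p1 ⊕ Fin p2) ℝ)
    (ρ0 : ℝ) (β0 : Fin p1 ⊕ Fin p2 → ℝ) (σ02 lam2 lamx2 : ℝ)
    (hS0 : 0 < (Smat W ρ0).det)
    (E ε : Ωs → Fin N → ℝ) (Ex : Ωs → Fin N → Fin p2 → ℝ)
    (hindep : iIndepFun (noiseFam E ε Ex) μ)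
    (hmom : ∀ z, MemLp (noiseFam E ε Ex z) 4 μ)
    (hmean : ∀ z, ∫ ω, noiseFam E ε Ex z ω ∂μ = 0)
    (hExvar : ∀ i j, ∫ ω, (Ex ω i j) ^ 2 ∂μ = lamx2) :
    ∀ j : Fin p1 ⊕ Fin p2,
      ∫ ω, deriv (fun t : ℝ =>
          nll W lam2 (Xobs X (Ex ω)) (Yobs W ρ0 X β0 (E ω) (ε ω)) ρ0
            (β0 + t • (Pi.single j 1 : (Fin p1 ⊕ Fin p2) → ℝ)) σ02) 0 ∂μ
        = Sum.elim (fun _ => (0 : ℝ))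
            (fun k => lamx2 * Matrix.trace (Omat W lam2 ρ0 σ02)⁻¹ * β0 (Sum.inr k)) j
  := by
  intro j
  set F := noiseFam E ε Ex
  have hL2 : ∀ z, MemLp (F z) 2 μ := fun z => (hmom z).mono_exponent (by norm_num)
  have horth : Pairwise fun z z' => ∫ ω, F z ω * F z' ω ∂μ = 0 := fun z z' hzz' => by
    dsimp only
    rw [(hindep.indepFun hzz').integral_fun_mul_eq_mul_integral (hmom z).1 (hmom z').1,
      hmean z, zero_mul]
  simp only [deriv_nll_Yobs_Xobs W lam2 ρ0 σ02 (isUnit_iff_ne_zero.mpr hS0.ne'), integral_neg]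
  rcases j with a | k
  · simp only [Xobs_col_inl, dotProduct_mulVec, Sum.elim_inl, neg_eq_zero]
    exact integral_dotProduct_eq_zero (F := F) (fun z => (hL2 z).integrable one_le_two) hmean _
  · have hvar : ∀ i, ∫ ω, F (.inr (.inr (i, k))) ω ^ 2 ∂μ = lamx2 := fun i => hExvar i k
    simp only [Xobs_col_inr, Sum.elim_inr, neg_eq_iff_eq_neg]
    refine (integral_add_comp_dotProduct_mulVec hL2 horth hmean _
      (fun i => .inr (.inr (i, k))) _).trans ?_
    simp only [hvar]
    exact sum_mul_residualCoeff_apply_noise_mul ..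

theorem statement_2
    {Ωs : Type*} [MeasurableSpace Ωs] (μ : Measure Ωs) [IsProbabilityMeasure μ]
    (N p1 p2 : ℕ) (hN : 0 < N) (hp1 : 0 < p1) (hp2 : 0 < p2)
    (W : Matrix (Fin N) (Fin N) ℝ) (hW : ∀ i, W i i = 0)
    (X : Matrix (Fin N) (Fin p1 ⊕ Fin p2) ℝ)
    (ρ0 : ℝ) (β0 : Fin p1 ⊕ Fin p2 → ℝ) (σ02 lam2 lamx2 : ℝ)
    (hσ : 0 < σ02) (hlam : 0 < lam2) (hlamx : 0 < lamx2)
    (hS0 : 0 < (Smat W ρ0).det)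
    (E ε : Ωs → Fin N → ℝ) (Ex : Ωs → Fin N → Fin p2 → ℝ)
    (hindep : iIndepFun (noiseFam E ε Ex) μ)
    (hmom : ∀ z, MemLp (noiseFam E ε Ex z) 4 μ)
    (hmean : ∀ z, ∫ ω, noiseFam E ε Ex z ω ∂μ = 0)
    (hEvar : ∀ i, ∫ ω, (E ω i) ^ 2 ∂μ = σ02)
    (hepsvar : ∀ i, ∫ ω, (ε ω i) ^ 2 ∂μ = lam2)
    (hExvar : ∀ i j, ∫ ω, (Ex ω i j) ^ 2 ∂μ = lamx2) :
    ∀ j : Fin p1 ⊕ Fin p2,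
      ∫ ω, deriv (fun t : ℝ =>
          nll W lam2 (Xobs X (Ex ω)) (Yobs W ρ0 X β0 (E ω) (ε ω)) ρ0
            (β0 + t • (Pi.single j 1 : (Fin p1 ⊕ Fin p2) → ℝ)) σ02) 0 ∂μ
        = Sum.elim (fun _ => (0 : ℝ))
            (fun k => lamx2 * Matrix.trace (Omat W lam2 ρ0 σ02)⁻¹ * β0 (Sum.inr k)) j :=
  statement_2_general μ N p1 p2 W X ρ0 β0 σ02 lam2 lamx2 hS0 E ε Ex hindep hmom hmean hExvar

end PSAR
end
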